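/- Let J ⊆ ℂ[x,y,z] be the ideal generated by the images f_{x,y}^ℂ, f_{x,z}^ℂ, f_{y,z}^ℂ of the three minor polynomials under coefficient extension ℝ[x,y,z] → ℂ[x,y,z]. For an ideal P of ℂ[x,y,z], let V_ℝ(P) = {v ∈ ℝ³ : every element of P vanishes at (v₁, v₂, v₃)} denote its real points, and call a minimal prime P over J relevant if O ∈ V_ℝ(P). Then Tendsto q (𝓝[{v : v ≠ O}] O) (𝓝 L) if and only if for every relevant minimal prime P over J, q tends to L at O along V_ℝ(P). -/

import Mathlib

open MvPolynomial Filter Topology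

/-- The quotient `q(v) = f(v)/g(v)`, with the convention `q(v) = 0` when `g(v) = 0`. -/
noncomputable def quotFun (f g : MvPolynomial (Fin 3) ℝ) (v : EuclideanSpace ℝ (Fin 3)) : ℝ :=
  eval v f / eval v g

/-- The polynomial `f_{xᵢ,xⱼ} = xᵢ(g ∂f/∂xⱼ − f ∂g/∂xⱼ) − xⱼ(g ∂f/∂xᵢ − f ∂g/∂xᵢ)`. -/
noncomputable def minorPoly (f g : MvPolynomial (Fin 3) ℝ) (i j : Fin 3) :
    MvPolynomial (Fin 3) ℝ :=
  X i * (g * pderiv j f - f * pderiv j g) - X j * (g * pderiv i f - f * pderiv i g)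

/-- The ideal `J ⊆ ℂ[x,y,z]` generated by the complexifications of the three minor
polynomials. -/
noncomputable def discrimIdeal (f g : MvPolynomial (Fin 3) ℝ) :
    Ideal (MvPolynomial (Fin 3) ℂ) :=
  Ideal.span {MvPolynomial.map (algebraMap ℝ ℂ) (minorPoly f g 0 1),
    MvPolynomial.map (algebraMap ℝ ℂ) (minorPoly f g 0 2),
    MvPolynomial.map (algebraMap ℝ ℂ) (minorPoly f g 1 2)}

/-- The real points of an ideal `P` of `ℂ[x,y,z]`. -/
def realPoints (P : Ideal (MvPolynomial (Fin 3) ℂ)) : Set (EuclideanSpace ℝ (Fin 3)) :=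
  {v | ∀ p ∈ P, eval (fun i => (v i : ℂ)) p = 0}

/-!
On a small sphere around `O` the denominator `g` has no zero, so `q` is continuous there and
attains its maximum and minimum. At such an extremum `w` the derivative of `q` along the rotation
of `w` in the `(xᵢ, xⱼ)`-plane vanishes; after clearing the denominator `g(w)²` this says that
`f_{xᵢ,xⱼ}(w) = 0`. Hence `w` is a real point of some minimal prime over `J`. Only finitely many
minimal primes exist, and the real locus of a non-relevant one is a closed set missing `O`, so the
extreme values of `q` on spheres of radius `r → 0` tend to `L`, and `q(v)` is squeezed between them.
-/

namespace MvPolynomial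

variable {𝕜 σ : Type*} [NontriviallyNormedField 𝕜] [Fintype σ]

noncomputable def dirDeriv (p : MvPolynomial σ 𝕜) (x v : σ → 𝕜) : 𝕜 :=
  ∑ k, eval x (pderiv k p) * v k

theorem dirDeriv_C (a : 𝕜) (x v : σ → 𝕜) : dirDeriv (C a) x v = 0 := by
  simp [dirDeriv]

theorem dirDeriv_X (n : σ) (x v : σ → 𝕜) : dirDeriv (X n) x v = v n := by
  classical
  simp [dirDeriv, pderiv_X, Pi.single_apply]

theorem dirDeriv_add (p q : MvPolynomial σ 𝕜) (x v : σ → 𝕜) :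
    dirDeriv (p + q) x v = dirDeriv p x v + dirDeriv q x v := by
  simp only [dirDeriv, Derivation.map_add, eval_add, add_mul, Finset.sum_add_distrib]

theorem dirDeriv_mul (p q : MvPolynomial σ 𝕜) (x v : σ → 𝕜) :
    dirDeriv (p * q) x v = dirDeriv p x v * eval x q + eval x p * dirDeriv q x v := by
  simp only [dirDeriv, Derivation.leibniz, smul_eq_mul, eval_add, eval_mul, Finset.sum_mul,
    Finset.mul_sum, ← Finset.sum_add_distrib]
  exact Finset.sum_congr rfl fun _ _ => by ring

theorem dirDeriv_smul (p : MvPolynomial σ 𝕜) (x v : σ → 𝕜) (a : 𝕜) :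
    dirDeriv p x (a • v) = a * dirDeriv p x v := by
  simp only [dirDeriv, Finset.mul_sum, Pi.smul_apply, smul_eq_mul]
  exact Finset.sum_congr rfl fun _ _ => by ring

theorem hasDerivAt_eval_comp (p : MvPolynomial σ 𝕜) {c : 𝕜 → σ → 𝕜} {c' : σ → 𝕜} {t : 𝕜}
    (hc : ∀ k, HasDerivAt (fun s => c s k) (c' k) t) :
    HasDerivAt (fun s => eval (c s) p) (dirDeriv p (c t) c') t := by
  induction p using MvPolynomial.induction_on with
  | C a => simpa only [eval_C, dirDeriv_C] using hasDerivAt_const t a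
  | add p q hp hq => simpa only [eval_add, dirDeriv_add] using hp.fun_add hq
  | mul_X p n hp =>
    simpa only [eval_mul, eval_X, dirDeriv_mul, dirDeriv_X] using hp.fun_mul (hc n)

end MvPolynomial

theorem norm_cos_smul_add_sin_smul {E : Type*} [NormedAddCommGroup E] [InnerProductSpace ℝ E]
    {w u : E} (hwu : inner ℝ w u = 0) (hu : ‖u‖ = ‖w‖) (t : ℝ) :
    ‖Real.cos t • w + Real.sin t • u‖ = ‖w‖ := by
  have hperp : inner ℝ (Real.cos t • w) (Real.sin t • u) = 0 := by
    rw [real_inner_smul_left, real_inner_smul_right, hwu, mul_zero, mul_zero]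
  rw [← sq_eq_sq₀ (norm_nonneg _) (norm_nonneg _), norm_add_sq_real, hperp, mul_zero,
    add_zero, norm_smul, norm_smul, hu,
    Real.norm_eq_abs, Real.norm_eq_abs, mul_pow, mul_pow, sq_abs, sq_abs, ← add_mul,
    Real.cos_sq_add_sin_sq, one_mul]

section Extremum

variable {σ : Type*} [Fintype σ]

theorem IsExtrOn.eval_mul_dirDeriv_sub_eq_zero {f g : MvPolynomial σ ℝ}
    {w u : EuclideanSpace ℝ σ}
    (hext : IsExtrOn (fun v : EuclideanSpace ℝ σ => eval v f / eval v g)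
      (Metric.sphere 0 ‖w‖) w)
    (hw : w ≠ 0) (hg : eval w g ≠ 0) (hwu : inner ℝ w u = 0) :
    eval w g * dirDeriv f w u - eval w f * dirDeriv g w u = 0 := by
  rcases eq_or_ne u 0 with rfl | hu
  · simp [dirDeriv]
  set a := ‖w‖ / ‖u‖
  have ha : a ≠ 0 := div_ne_zero (norm_ne_zero_iff.2 hw) (norm_ne_zero_iff.2 hu)
  let γ : ℝ → EuclideanSpace ℝ σ := fun t => Real.cos t • w + Real.sin t • (a • u)
  have hγ : Set.MapsTo γ Set.univ (Metric.sphere 0 ‖w‖) := fun t _ => by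
    refine mem_sphere_zero_iff_norm.2 (norm_cos_smul_add_sin_smul ?_ ?_ t)
    · rw [real_inner_smul_right, hwu, mul_zero]
    · rw [norm_smul, Real.norm_eq_abs, abs_of_nonneg (by positivity),
        div_mul_cancel₀ _ (norm_ne_zero_iff.2 hu)]
  have hγ0 : (γ 0 : σ → ℝ) = w := by ext; simp [γ]
  have hγ' : ∀ k, HasDerivAt (fun t => (γ t : σ → ℝ) k) ((a • u : σ → ℝ) k) 0 := by
    intro k
    have := ((Real.hasDerivAt_cos 0).mul_const (w k)).fun_add
      ((Real.hasDerivAt_sin 0).mul_const ((a • u) k))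
    simpa [γ] using this
  have hderiv := (hasDerivAt_eval_comp f hγ').div (hasDerivAt_eval_comp g hγ')
    (by rwa [hγ0])
  have hloc : IsLocalExtr (fun t => eval (γ t) f / eval (γ t) g) 0 :=
    ((hext.comp_mapsTo hγ (by ext; simp [γ])).isLocalExtr Filter.univ_mem)
  have hcrit := hloc.hasDerivAt_eq_zero hderiv
  rw [hγ0, div_eq_zero_iff, dirDeriv_smul, dirDeriv_smul] at hcrit
  refine mul_left_cancel₀ ha ?_
  linear_combination hcrit.resolve_right (pow_ne_zero 2 hg)

end Extremum

theorem eval_minorPoly_eq_zero_of_isExtrOn {f g : MvPolynomial (Fin 3) ℝ}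
    {w : EuclideanSpace ℝ (Fin 3)}
    (hext : IsExtrOn (quotFun f g) (Metric.sphere 0 ‖w‖) w) (hw : w ≠ 0)
    (hg : eval w g ≠ 0) (i j : Fin 3) :
    eval w (minorPoly f g i j) = 0 := by
  -- `u` is the velocity of the rotation of `w` in the `(xᵢ, xⱼ)`-plane.
  have hcrit := hext.eval_mul_dirDeriv_sub_eq_zero hw hg
    (u := w i • EuclideanSpace.single j 1 - w j • EuclideanSpace.single i 1)
    (by simp only [inner_sub_right, real_inner_smul_right, EuclideanSpace.inner_single_right,
      Real.ringHom_apply, one_mul]; ring)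
  simp only [dirDeriv, PiLp.sub_apply, PiLp.smul_apply, PiLp.single_apply, smul_eq_mul, mul_ite,
    mul_one, mul_zero, mul_sub, Finset.sum_sub_distrib, Finset.sum_ite_eq', Finset.mem_univ,
    ↓reduceIte] at hcrit
  simp only [minorPoly, eval_sub, eval_mul, eval_X]
  linear_combination hcrit

theorem tendsto_nhdsWithin_biUnion_diff {X Y ι : Type*} [TopologicalSpace X] {I : Set ι}
    (hI : I.Finite) {S : ι → Set X} (hS : ∀ i ∈ I, IsClosed (S i)) {q : X → Y}
    {l : Filter Y} {a : X} (h : ∀ i ∈ I, a ∈ S i → Tendsto q (𝓝[S i \ {a}] a) l) :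
    Tendsto q (𝓝[(⋃ i ∈ I, S i) \ {a}] a) l := by
  simp only [Set.iUnion_sdiff]
  rw [nhdsWithin_biUnion hI]
  refine tendsto_iSup.2 fun i => tendsto_iSup.2 fun hi => ?_
  by_cases ha : a ∈ S i
  · exact h i hi ha
  · have : a ∉ closure (S i \ {a}) := fun h' =>
      ha ((hS i hi).closure_subset_iff.2 Set.sdiff_subset h')
    simp [notMem_closure_iff_nhdsWithin_eq_bot.1 this]

theorem tendsto_nhdsNE_zero_of_sphere_extrema_mem {E : Type*} [NormedAddCommGroup E]
    [ProperSpace E] {q : E → ℝ} {Z : Set E} {ε L : ℝ}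
    (hcont : ∀ v : E, v ≠ 0 → ‖v‖ < ε → ContinuousOn q (Metric.sphere 0 ‖v‖))
    (hZ : ∀ w : E, w ≠ 0 → ‖w‖ < ε → IsExtrOn q (Metric.sphere 0 ‖w‖) w → w ∈ Z)
    (hε : 0 < ε) (hL : Tendsto q (𝓝[Z \ {0}] 0) (𝓝 L)) :
    Tendsto q (𝓝[≠] 0) (𝓝 L) := by
  rw [Metric.tendsto_nhdsWithin_nhds] at hL ⊢
  intro δ hδ
  obtain ⟨ρ, hρ, hρL⟩ := hL δ hδ
  refine ⟨min ρ ε, lt_min hρ hε, fun v (hv : v ≠ 0) hvr => ?_⟩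
  rw [dist_zero_right, lt_min_iff] at hvr
  have hS : v ∈ Metric.sphere (0 : E) ‖v‖ := mem_sphere_zero_iff_norm.2 rfl
  have hclose : ∀ w ∈ Metric.sphere (0 : E) ‖v‖, IsExtrOn q (Metric.sphere 0 ‖v‖) w →
      dist (q w) L < δ := fun w hw hext => by
    rw [mem_sphere_zero_iff_norm] at hw
    have hw0 : w ≠ 0 := norm_ne_zero_iff.1 (hw ▸ norm_ne_zero_iff.2 hv)
    refine hρL ⟨hZ w hw0 (hw ▸ hvr.2) (hw ▸ hext), hw0⟩ ?_
    rw [dist_zero_right, hw]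
    exact hvr.1
  obtain ⟨wmax, hwmax, hmax⟩ :=
    (isCompact_sphere 0 ‖v‖).exists_isMaxOn ⟨v, hS⟩ (hcont v hv hvr.2)
  obtain ⟨wmin, hwmin, hmin⟩ :=
    (isCompact_sphere 0 ‖v‖).exists_isMinOn ⟨v, hS⟩ (hcont v hv hvr.2)
  have h₁ := hclose wmax hwmax (.inr hmax)
  have h₂ := hclose wmin hwmin (.inl hmin)
  have h₃ : q v ≤ q wmax := hmax hS
  have h₄ : q wmin ≤ q v := hmin hS
  rw [Real.dist_eq, abs_sub_lt_iff] at h₁ h₂ ⊢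
  constructor <;> linarith

theorem continuous_eval_ofReal {σ : Type*} (p : MvPolynomial σ ℂ) :
    Continuous fun v : EuclideanSpace ℝ σ => eval (fun i => (v i : ℂ)) p :=
  (continuous_eval p).comp (by fun_prop)

theorem isClosed_realPoints (P : Ideal (MvPolynomial (Fin 3) ℂ)) : IsClosed (realPoints P) := by
  simp only [realPoints, Set.ofPred_forall]
  exact isClosed_biInter fun p _ => isClosed_eq (continuous_eval_ofReal p) continuous_const

theorem exists_mem_minimalPrimes_of_mem_realPoints {I : Ideal (MvPolynomial (Fin 3) ℂ)}
    {w : EuclideanSpace ℝ (Fin 3)} (hw : w ∈ realPoints I) :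
    ∃ P ∈ I.minimalPrimes, w ∈ realPoints P := by
  have := RingHom.ker_isPrime (eval fun i => (w i : ℂ))
  obtain ⟨P, hP, hle⟩ := Ideal.exists_minimalPrimes_le
    (J := RingHom.ker (eval fun i => (w i : ℂ))) fun p hp => RingHom.mem_ker.2 (hw p hp)
  exact ⟨P, hP, fun p hp => RingHom.mem_ker.1 (hle hp)⟩

theorem eval_ofReal_map_algebraMap {σ : Type*} (p : MvPolynomial σ ℝ) (x : σ → ℝ) :
    eval (fun i => (x i : ℂ)) (map (algebraMap ℝ ℂ) p) = eval x p := by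
  rw [eval_map]
  exact (eval₂_comp (algebraMap ℝ ℂ) x p).symm

theorem mem_realPoints_discrimIdeal {f g : MvPolynomial (Fin 3) ℝ}
    {w : EuclideanSpace ℝ (Fin 3)} (h : ∀ i j, eval w (minorPoly f g i j) = 0) :
    w ∈ realPoints (discrimIdeal f g) := by
  have hle : discrimIdeal f g ≤ RingHom.ker (eval fun i => (w i : ℂ)) := by
    rw [discrimIdeal, Ideal.span_le]
    rintro _ (rfl | rfl | rfl) <;>
      simp only [SetLike.mem_coe, RingHom.mem_ker, eval_ofReal_map_algebraMap, h,
        Complex.ofReal_zero]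
  exact fun p hp => RingHom.mem_ker.1 (hle hp)

/-- The limit of `q` at the origin exists and equals `L` iff `q` tends to `L` along the
real points of each relevant minimal prime over the discriminant ideal (i.e. each minimal
prime whose real locus contains the origin). -/
theorem limit_iff_limit_along_relevant_components (f g : MvPolynomial (Fin 3) ℝ)
    (hg : ∃ ε > 0, ∀ v ∈ Metric.ball (0 : EuclideanSpace ℝ (Fin 3)) ε, eval v g = 0 → v = 0)
    (L : ℝ) :
    Tendsto (quotFun f g) (𝓝[{v : EuclideanSpace ℝ (Fin 3) | v ≠ 0}] 0) (𝓝 L) ↔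
      ∀ P ∈ (discrimIdeal f g).minimalPrimes, (0 : EuclideanSpace ℝ (Fin 3)) ∈ realPoints P →
        Tendsto (quotFun f g) (𝓝[realPoints P \ {0}] 0) (𝓝 L) := by
  refine ⟨fun h P _ _ => h.mono_left (nhdsWithin_mono _ fun v hv => hv.2), fun h => ?_⟩
  obtain ⟨ε, hε, hg⟩ := hg
  have hg_ne : ∀ w : EuclideanSpace ℝ (Fin 3), w ≠ 0 → ‖w‖ < ε → eval w g ≠ 0 :=
    fun w hw hwε hgw => hw (hg w (mem_ball_zero_iff.2 hwε) hgw)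
  have hZ := tendsto_nhdsWithin_biUnion_diff
    (discrimIdeal f g).finite_minimalPrimes_of_isNoetherianRing
    (fun P _ => isClosed_realPoints P) h
  refine tendsto_nhdsNE_zero_of_sphere_extrema_mem
    (fun v hv hvε => ?_) (fun w hw hwε hext => ?_) hε hZ
  · refine ((continuous_eval f).comp (PiLp.continuous_ofLp 2 _)).continuousOn.div
      ((continuous_eval g).comp (PiLp.continuous_ofLp 2 _)).continuousOn fun w hw => ?_
    rw [mem_sphere_zero_iff_norm] at hw
    exact hg_ne w (norm_ne_zero_iff.1 (hw ▸ norm_ne_zero_iff.2 hv)) (hw ▸ hvε)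
  · obtain ⟨P, hP, hwP⟩ := exists_mem_minimalPrimes_of_mem_realPoints <|
      mem_realPoints_discrimIdeal (eval_minorPoly_eq_zero_of_isExtrOn hext hw (hg_ne w hw hwε))
    exact Set.mem_biUnion hP hwP
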